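/- Let (Ω, F, P) be a probability space with a filtration (F_t)_{t≥0}, and let (Y_t)_{t≥1} be nonnegative random variables with Y_t measurable with respect to F_t. Suppose there exist ε ∈ (0,1) and c > 0 such that for every t ≥ 1, P(|Y_t − 1| > ε | F_{t−1}) ≥ c almost surely. Let M_0 be a nonnegative F_0-measurable random variable and define M_t = M_0 ∏_{s=1}^t Y_s. If M_t converges almost surely to a random variable W as t → ∞, then W = 0 almost surely. -/

import Mathlib

/-!
By Lévy's conditional Borel–Cantelli lemma, the conditional lower bound `c` makes the events
`|Y_t - 1| > ε` occur infinitely often almost surely, since their conditional probabilities sum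
to infinity. On the other hand, wherever `M_t → W ≠ 0`, the ratios `Y_{t+1} = M_{t+1} / M_t`
tend to `1`, so these events eventually stop occurring.
-/

open MeasureTheory ProbabilityTheory Filter Topology

theorem ae_frequently_mem_of_le_condExp_indicator {Ω : Type*} [m0 : MeasurableSpace Ω]
    {P : Measure Ω} [IsFiniteMeasure P] (F : Filtration ℕ m0) {s : ℕ → Set Ω}
    (hs : ∀ n, MeasurableSet[F n] (s n)) {c : ℝ} (hc : 0 < c)
    (hcond : ∀ k, ∀ᵐ ω ∂P, c ≤ P[(s (k + 1)).indicator 1 | F k] ω) :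
    ∀ᵐ ω ∂P, ∃ᶠ n in atTop, ω ∈ s n := by
  filter_upwards [ae_mem_limsup_atTop_iff P hs, ae_all_iff.2 hcond] with ω hlimsup hω
  rw [← mem_limsup_iff_frequently_mem, hlimsup]
  refine tendsto_atTop_mono (fun n => ?_) (tendsto_natCast_atTop_atTop.atTop_mul_const hc)
  simpa using Finset.sum_le_sum fun k (_ : k ∈ Finset.range n) => hω k

theorem eq_zero_of_tendsto_of_frequently_lt_abs_sub_one {m y : ℕ → ℝ} {w ε : ℝ} (hε : 0 < ε)
    (hrec : ∀ t, m (t + 1) = m t * y (t + 1)) (hm : Tendsto m atTop (𝓝 w))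
    (hfar : ∃ᶠ t in atTop, ε < |y t - 1|) : w = 0 := by
  by_contra hw
  have hy : Tendsto y atTop (𝓝 1) := by
    rw [← tendsto_add_atTop_iff_nat 1]
    have hratio : Tendsto (fun t => m (t + 1) / m t) atTop (𝓝 1) := by
      have h := ((tendsto_add_atTop_iff_nat 1).2 hm).div hm hw
      rwa [div_self hw] at h
    refine hratio.congr' ?_
    filter_upwards [hm.eventually_ne hw] with t ht
    rw [hrec, mul_div_cancel_left₀ _ ht]
  obtain ⟨t, hfar_t, hclose_t⟩ := (hfar.and_eventually (Metric.tendsto_nhds.1 hy ε hε)).exists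
  rw [Real.dist_eq] at hclose_t
  exact hfar_t.not_gt hclose_t

theorem product_process_converges_to_zero_general
    {Ω : Type*} [m0 : MeasurableSpace Ω] {P : Measure Ω} [IsProbabilityMeasure P]
    (F : Filtration ℕ m0) (Y : ℕ → Ω → ℝ)
    (hYmeas : ∀ t, 1 ≤ t → Measurable[F t] (Y t))
    {ε : ℝ} (hε : ε ∈ Set.Ioo (0 : ℝ) 1) {c : ℝ} (hc : 0 < c)
    (hcond : ∀ t, 1 ≤ t → ∀ᵐ ω ∂P,
      c ≤ (P[Set.indicator {ω' | ε < |Y t ω' - 1|} (fun _ => (1 : ℝ)) | F (t - 1)]) ω)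
    (M0 : Ω → ℝ)
    (M : ℕ → Ω → ℝ) (hM : ∀ t ω, M t ω = M0 ω * ∏ s ∈ Finset.Icc 1 t, Y s ω)
    (W : Ω → ℝ) (hconv : ∀ᵐ ω ∂P, Tendsto (fun t => M t ω) atTop (nhds (W ω))) :
    ∀ᵐ ω ∂P, W ω = 0 := by
  -- `Y 0` is not assumed `F 0`-measurable, so the index `0` is excluded from the bad events.
  set s : ℕ → Set Ω := fun n => {ω | n ≠ 0 ∧ ε < |Y n ω - 1|}
  have hs : ∀ n, MeasurableSet[F n] (s n) := by
    rintro (_ | n)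
    · simp [s]
    · let _ : MeasurableSpace Ω := F (n + 1)
      exact (MeasurableSet.const _).inter
        (measurableSet_lt measurable_const ((hYmeas _ n.succ_pos).sub_const 1).abs)
  have hfreq := ae_frequently_mem_of_le_condExp_indicator F hs hc fun k => by
    simpa [s, Pi.one_def] using hcond (k + 1) k.succ_pos
  filter_upwards [hconv, hfreq] with ω hω hfreq_ω
  refine eq_zero_of_tendsto_of_frequently_lt_abs_sub_one hε.1 (fun t => ?_) hω
    (hfreq_ω.mono fun _ h => h.2)
  rw [hM, hM, Finset.prod_Icc_succ_top (Nat.le_add_left 1 t), mul_assoc]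

/-- Let `(Ω, F, P)` be a probability space with filtration `(F_t)_{t ≥ 0}`
and let `(Y_t)_{t ≥ 1}` be nonnegative random variables, `Y_t` being `F_t`-measurable.
Suppose there are `ε ∈ (0,1)` and `c > 0` such that for every `t ≥ 1`,
`P(|Y_t − 1| > ε | F_{t-1}) ≥ c` almost surely.  Let `M_0` be a nonnegative
`F_0`-measurable random variable and `M_t = M_0 ∏_{s=1}^t Y_s`.  If `M_t` converges almost
surely to a random variable `W`, then `W = 0` almost surely. -/
theorem product_process_converges_to_zero
    {Ω : Type*} [m0 : MeasurableSpace Ω] {P : Measure Ω} [IsProbabilityMeasure P]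
    (F : Filtration ℕ m0) (Y : ℕ → Ω → ℝ)
    (hYnn : ∀ t, 1 ≤ t → ∀ ω, 0 ≤ Y t ω)
    (hYmeas : ∀ t, 1 ≤ t → Measurable[F t] (Y t))
    {ε : ℝ} (hε : ε ∈ Set.Ioo (0 : ℝ) 1) {c : ℝ} (hc : 0 < c)
    (hcond : ∀ t, 1 ≤ t → ∀ᵐ ω ∂P,
      c ≤ (P[Set.indicator {ω' | ε < |Y t ω' - 1|} (fun _ => (1 : ℝ)) | F (t - 1)]) ω)
    (M0 : Ω → ℝ) (hM0meas : Measurable[F 0] M0) (hM0nn : ∀ ω, 0 ≤ M0 ω)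
    (M : ℕ → Ω → ℝ) (hM : ∀ t ω, M t ω = M0 ω * ∏ s ∈ Finset.Icc 1 t, Y s ω)
    (W : Ω → ℝ) (hconv : ∀ᵐ ω ∂P, Tendsto (fun t => M t ω) atTop (nhds (W ω))) :
    ∀ᵐ ω ∂P, W ω = 0 :=
  product_process_converges_to_zero_general (m0 := m0) F Y hYmeas hε hc hcond M0 M hM W hconv
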